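/- arXiv:1209.2361 — 5 statements merged into one kernel-verified Lean document; each statement's English description precedes it below -/
import Mathlib

section
/- The min-max problem θ = min{ max_{a∈A_up} d_a/C_a , min_{b∈A_down} max_{∅≠A₁⊆A_up} (s_b − Σ_{α∈A_up∖A₁} d_α ξ_{α→b}) / (Σ_{a∈A₁} C_a ξ_{a→b}) } has a unique solution θ, and θ ∈ [0,1]. -/
/-!
The min-max value is given explicitly, so uniqueness is immediate. It is at most the largest
demand ratio `d a / C a ≤ 1`. It is nonnegative: those ratios are, and for every `b` the inner
maximum is at least its value at `A₁ = A_up`, where nothing is subtracted and the quotient is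
`s b / ∑ a, C a * ξ a b ≥ 0`.
-/

open Finset

theorem sup'_div_mem_Icc {ι : Type*} {t : Finset ι} (ht : t.Nonempty) {C d : ι → ℝ}
    (hC : ∀ a ∈ t, 0 < C a) (hd0 : ∀ a ∈ t, 0 ≤ d a) (hdC : ∀ a ∈ t, d a ≤ C a) :
    t.sup' ht (fun a => d a / C a) ∈ Set.Icc (0 : ℝ) 1 := by
  obtain ⟨a, ha⟩ := ht
  refine ⟨le_sup'_of_le _ ha (div_nonneg (hd0 a ha) (hC a ha).le), ?_⟩
  exact sup'_le _ _ fun a ha => div_le_one_of_le₀ (hdC a ha) (hC a ha).le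

section ResidualSupply

variable {ι κ : Type*} [Fintype ι] [DecidableEq ι]

/-- The supply of `b` left after the arcs outside `A₁` have sent their whole demand, per unit of
capacity of `A₁` directed to `b`. -/
noncomputable def residualSupplyRatio (C d : ι → ℝ) (s : κ → ℝ) (ξ : ι → κ → ℝ) (b : κ)
    (A₁ : Finset ι) : ℝ :=
  (s b - ∑ α ∈ A₁ᶜ, d α * ξ α b) / ∑ a ∈ A₁, C a * ξ a b

theorem residualSupplyRatio_univ (C d : ι → ℝ) (s : κ → ℝ) (ξ : ι → κ → ℝ) (b : κ) :
    residualSupplyRatio C d s ξ b univ = s b / ∑ a, C a * ξ a b := by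
  simp [residualSupplyRatio]

theorem residualSupplyRatio_univ_nonneg {C d : ι → ℝ} {s : κ → ℝ} {ξ : ι → κ → ℝ} {b : κ}
    (hs : 0 ≤ s b) (hflow : 0 ≤ ∑ a, C a * ξ a b) :
    0 ≤ residualSupplyRatio C d s ξ b univ := by
  rw [residualSupplyRatio_univ]
  exact div_nonneg hs hflow

theorem sup'_residualSupplyRatio_nonneg [Nonempty ι] {C d : ι → ℝ} {s : κ → ℝ}
    {ξ : ι → κ → ℝ} {b : κ} (hs : 0 ≤ s b) (hflow : 0 ≤ ∑ a, C a * ξ a b) :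
    0 ≤ (univ : Finset {A₁ : Finset ι // A₁.Nonempty}).sup'
      ⟨⟨univ, univ_nonempty⟩, mem_univ _⟩ (fun A₁ => residualSupplyRatio C d s ξ b A₁.1) :=
  le_sup'_of_le _ (mem_univ (⟨univ, univ_nonempty⟩ : {A₁ : Finset ι // A₁.Nonempty}))
    (residualSupplyRatio_univ_nonneg hs hflow)

end ResidualSupply

theorem critical_demand_level_exists_unique_general
    {ι κ : Type} [Fintype ι] [Fintype κ] [Nonempty ι] [Nonempty κ] [DecidableEq ι]
    (C d : ι → ℝ) (s : κ → ℝ) (ξ : ι → κ → ℝ)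
    (hC : ∀ a, 0 < C a) (hd0 : ∀ a, 0 ≤ d a) (hdC : ∀ a, d a ≤ C a)
    (hs : ∀ b, 0 ≤ s b)
    (hpos : ∀ A₁ : Finset ι, A₁.Nonempty → ∀ b, 0 < ∑ a ∈ A₁, C a * ξ a b) :
    ∃! θ : ℝ,
      θ = min
          ((Finset.univ : Finset ι).sup' Finset.univ_nonempty (fun a => d a / C a))
          ((Finset.univ : Finset κ).inf' Finset.univ_nonempty (fun b =>
            (Finset.univ : Finset {A₁ : Finset ι // A₁.Nonempty}).sup'
              ⟨⟨Finset.univ, Finset.univ_nonempty⟩, Finset.mem_univ _⟩ (fun A₁ =>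
                (s b - ∑ α ∈ (A₁.1)ᶜ, d α * ξ α b) / (∑ a ∈ A₁.1, C a * ξ a b))))
        ∧ θ ∈ Set.Icc (0 : ℝ) 1 := by
  have hdemand := sup'_div_mem_Icc univ_nonempty (fun a _ => hC a) (fun a _ => hd0 a)
    (fun a _ => hdC a)
  have hsupply := le_inf' univ_nonempty _ fun b _ =>
    sup'_residualSupplyRatio_nonneg (C := C) (d := d) (hs b) (hpos univ univ_nonempty b).le
  exact ⟨_, ⟨rfl, le_min hdemand.1 hsupply, (min_le_left _ _).trans hdemand.2⟩, fun _ h => h.1⟩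

/-- The critical demand level min-max problem has a unique solution θ, and θ ∈ [0,1]. -/
theorem critical_demand_level_exists_unique
    {ι κ : Type} [Fintype ι] [Fintype κ] [Nonempty ι] [Nonempty κ] [DecidableEq ι]
    (C d : ι → ℝ) (s : κ → ℝ) (ξ : ι → κ → ℝ)
    (hC : ∀ a, 0 < C a) (hd0 : ∀ a, 0 ≤ d a) (hdC : ∀ a, d a ≤ C a)
    (hs : ∀ b, 0 ≤ s b) (hξ : ∀ a b, 0 ≤ ξ a b)
    (hξsum : ∀ a, ∑ b, ξ a b = 1)
    (hpos : ∀ A₁ : Finset ι, A₁.Nonempty → ∀ b, 0 < ∑ a ∈ A₁, C a * ξ a b) :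
    ∃! θ : ℝ,
      θ = min
          ((Finset.univ : Finset ι).sup' Finset.univ_nonempty (fun a => d a / C a))
          ((Finset.univ : Finset κ).inf' Finset.univ_nonempty (fun b =>
            (Finset.univ : Finset {A₁ : Finset ι // A₁.Nonempty}).sup'
              ⟨⟨Finset.univ, Finset.univ_nonempty⟩, Finset.mem_univ _⟩ (fun A₁ =>
                (s b - ∑ α ∈ (A₁.1)ᶜ, d α * ξ α b) / (∑ a ∈ A₁.1, C a * ξ a b))))
        ∧ θ ∈ Set.Icc (0 : ℝ) 1 :=
  critical_demand_level_exists_unique_general C d s ξ hC hd0 hdC hs hpos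
end

section
/- If θ = max_{a∈A_up} d_a/C_a (i.e., the first term achieves the minimum), then for every b ∈ A_down the in-flux f_b = Σ_{a∈A_up} min{d_a, θ C_a} ξ_{a→b} equals Σ_a d_a ξ_{a→b} and satisfies f_b ≤ s_b. -/
/-!
Since `θ` is the largest ratio `d a / C a`, we have `d a ≤ θ C a`, so the minimum in the in-flux
is just `d a`. For the supply bound, `θ` is also at most the min-max bottleneck, so at the node `b`
some nonempty `A₁` has `θ ≤ (s b - ∑_{A₁ᶜ} d ξ) / ∑_{A₁} C ξ`. Then
`∑_{A₁} d ξ ≤ θ ∑_{A₁} C ξ ≤ s b - ∑_{A₁ᶜ} d ξ`.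
-/

open Finset

lemma le_sup'_div_mul {ι : Type*} {s : Finset ι} (hs : s.Nonempty) {d C : ι → ℝ} {a : ι}
    (ha : a ∈ s) (hCa : 0 < C a) : d a ≤ s.sup' hs (fun i => d i / C i) * C a :=
  (div_le_iff₀ hCa).1 (le_sup' (fun i => d i / C i) ha)

lemma sum_le_of_le_div_sum {ι : Type*} [Fintype ι] [DecidableEq ι] (A : Finset ι)
    {x y : ι → ℝ} {θ S : ℝ} (hxy : ∀ a ∈ A, x a ≤ θ * y a) (hy : 0 < ∑ a ∈ A, y a)
    (hθ : θ ≤ (S - ∑ a ∈ Aᶜ, x a) / ∑ a ∈ A, y a) : ∑ a, x a ≤ S := by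
  have hA : ∑ a ∈ A, x a ≤ θ * ∑ a ∈ A, y a := by
    rw [mul_sum]
    exact sum_le_sum hxy
  rw [le_div_iff₀ hy] at hθ
  rw [← sum_add_sum_compl A x]
  linarith

theorem influx_eq_demand_of_theta_max_general
    {ι κ : Type} [Fintype ι] [Fintype κ] [Nonempty ι] [Nonempty κ] [DecidableEq ι]
    (C d : ι → ℝ) (s : κ → ℝ) (ξ : ι → κ → ℝ)
    (hC : ∀ a, 0 < C a)
    (hξ : ∀ a b, 0 ≤ ξ a b)
    (hpos : ∀ A₁ : Finset ι, A₁.Nonempty → ∀ b, 0 < ∑ a ∈ A₁, C a * ξ a b)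
    (θ : ℝ)
    (hθ : θ = min
          ((Finset.univ : Finset ι).sup' Finset.univ_nonempty (fun a => d a / C a))
          ((Finset.univ : Finset κ).inf' Finset.univ_nonempty (fun b =>
            (Finset.univ : Finset {A₁ : Finset ι // A₁.Nonempty}).sup'
              ⟨⟨Finset.univ, Finset.univ_nonempty⟩, Finset.mem_univ _⟩ (fun A₁ =>
                (s b - ∑ α ∈ (A₁.1)ᶜ, d α * ξ α b) / (∑ a ∈ A₁.1, C a * ξ a b)))))
    (hmax : θ = (Finset.univ : Finset ι).sup' Finset.univ_nonempty (fun a => d a / C a)) :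
    ∀ b, (∑ a, min (d a) (θ * C a) * ξ a b) = ∑ a, d a * ξ a b ∧
      (∑ a, min (d a) (θ * C a) * ξ a b) ≤ s b := by
  intro b
  have hdθ : ∀ a, d a ≤ θ * C a := fun a => hmax ▸ le_sup'_div_mul _ (mem_univ a) (hC a)
  have hflux : ∑ a, min (d a) (θ * C a) * ξ a b = ∑ a, d a * ξ a b :=
    sum_congr rfl fun a _ => by rw [min_eq_left (hdθ a)]
  refine ⟨hflux, hflux ▸ ?_⟩
  obtain ⟨A₁, -, hA₁⟩ := (le_sup'_iff _).1 <|
    (le_inf'_iff _ _).1 (hθ.le.trans (min_le_right _ _)) b (mem_univ b)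
  exact sum_le_of_le_div_sum A₁.1
    (fun a _ => by rw [← mul_assoc]; exact mul_le_mul_of_nonneg_right (hdθ a) (hξ a b))
    (hpos A₁.1 A₁.2 b) hA₁

/-- If θ equals the maximum demand level, then each in-flux
f_b = Σ_a min{d_a, θ C_a} ξ_{a→b} equals Σ_a d_a ξ_{a→b} and is bounded by the supply s_b. -/
theorem influx_eq_demand_of_theta_max
    {ι κ : Type} [Fintype ι] [Fintype κ] [Nonempty ι] [Nonempty κ] [DecidableEq ι]
    (C d : ι → ℝ) (s : κ → ℝ) (ξ : ι → κ → ℝ)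
    (hC : ∀ a, 0 < C a) (hd0 : ∀ a, 0 ≤ d a) (hdC : ∀ a, d a ≤ C a)
    (hs : ∀ b, 0 ≤ s b) (hξ : ∀ a b, 0 ≤ ξ a b)
    (hξsum : ∀ a, ∑ b, ξ a b = 1)
    (hpos : ∀ A₁ : Finset ι, A₁.Nonempty → ∀ b, 0 < ∑ a ∈ A₁, C a * ξ a b)
    (θ : ℝ)
    (hθ : θ = min
          ((Finset.univ : Finset ι).sup' Finset.univ_nonempty (fun a => d a / C a))
          ((Finset.univ : Finset κ).inf' Finset.univ_nonempty (fun b =>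
            (Finset.univ : Finset {A₁ : Finset ι // A₁.Nonempty}).sup'
              ⟨⟨Finset.univ, Finset.univ_nonempty⟩, Finset.mem_univ _⟩ (fun A₁ =>
                (s b - ∑ α ∈ (A₁.1)ᶜ, d α * ξ α b) / (∑ a ∈ A₁.1, C a * ξ a b)))))
    (hmax : θ = (Finset.univ : Finset ι).sup' Finset.univ_nonempty (fun a => d a / C a)) :
    ∀ b, (∑ a, min (d a) (θ * C a) * ξ a b) = ∑ a, d a * ξ a b ∧
      (∑ a, min (d a) (θ * C a) * ξ a b) ≤ s b :=
  influx_eq_demand_of_theta_max_general C d s ξ hC hξ hpos θ hθ hmax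
end

section
/- The fair-merge out-flux g₁(d₁, d₂, s₃) = min{d₁, max{s₃ − d₂, (C₁/(C₁+C₂)) s₃}} is Lipschitz continuous in (d₁, d₂, s₃), and satisfies 0 ≤ g₁ ≤ d₁ and g₁ + g₂ = min{d₁ + d₂, s₃} where g₂ := min{d₁+d₂, s₃} − g₁ satisfies 0 ≤ g₂ ≤ d₂. -/
/-!
Writing `α = C₁ / (C₁ + C₂) ∈ [0, 1]`, the flux `g₁ = min d₁ (max (s₃ - d₂) (α s₃))` is built
from coordinate projections by subtraction, scaling, `max` and `min`, so it is Lipschitz. The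
only non-obvious bound is `g₂ ≤ d₂`, which holds because
`g₁ + d₂ = min (d₁ + d₂) (max s₃ (α s₃ + d₂)) ≥ min (d₁ + d₂) s₃`.
-/

def mergeOutflux (α d₁ d₂ s : ℝ) : ℝ := min d₁ (max (s - d₂) (α * s))

theorem lipschitzWith_mergeOutflux (α : ℝ) :
    LipschitzWith (max 1 (max (1 + 1) ‖α‖₊))
      fun p : ℝ × ℝ × ℝ ↦ mergeOutflux α p.1 p.2.1 p.2.2 := by
  have hd₁ : LipschitzWith 1 fun p : ℝ × ℝ × ℝ ↦ p.1 := LipschitzWith.prod_fst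
  have hd₂ : LipschitzWith 1 fun p : ℝ × ℝ × ℝ ↦ p.2.1 := by
    simpa [Function.comp_def] using LipschitzWith.prod_fst.comp LipschitzWith.prod_snd
  have hs : LipschitzWith 1 fun p : ℝ × ℝ × ℝ ↦ p.2.2 := by
    simpa [Function.comp_def] using LipschitzWith.prod_snd.comp LipschitzWith.prod_snd
  have hαs : LipschitzWith ‖α‖₊ fun p : ℝ × ℝ × ℝ ↦ α * p.2.2 := by
    simpa [Function.comp_def] using (lipschitzWith_smul α).comp hs
  exact hd₁.min ((hs.sub hd₂).max hαs)

section Bounds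

variable {α d₁ d₂ s : ℝ}

theorem mergeOutflux_nonneg (hα : 0 ≤ α) (hd₁ : 0 ≤ d₁) (hs : 0 ≤ s) :
    0 ≤ mergeOutflux α d₁ d₂ s :=
  le_min hd₁ (le_max_of_le_right (mul_nonneg hα hs))

theorem mergeOutflux_le_left : mergeOutflux α d₁ d₂ s ≤ d₁ :=
  min_le_left _ _

theorem mergeOutflux_le_min (hα : α ≤ 1) (hd₂ : 0 ≤ d₂) (hs : 0 ≤ s) :
    mergeOutflux α d₁ d₂ s ≤ min (d₁ + d₂) s :=
  min_le_min (by linarith) (max_le (by linarith) (mul_le_of_le_one_left hs hα))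

theorem min_sub_mergeOutflux_le : min (d₁ + d₂) s - mergeOutflux α d₁ d₂ s ≤ d₂ := by
  have h : mergeOutflux α d₁ d₂ s + d₂ = min (d₁ + d₂) (max s (α * s + d₂)) := by
    rw [mergeOutflux, ← min_add_add_right, ← max_add_add_right, sub_add_cancel]
  have : min (d₁ + d₂) s ≤ mergeOutflux α d₁ d₂ s + d₂ :=
    h ▸ min_le_min le_rfl (le_max_left _ _)
  linarith

end Bounds

/-- The fair-merge out-flux g₁ is Lipschitz continuous in (d₁, d₂, s₃), and on the
physical domain satisfies 0 ≤ g₁ ≤ d₁, g₁ + g₂ = min{d₁+d₂, s₃}, and 0 ≤ g₂ ≤ d₂. -/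
theorem fair_merge_flux_properties (C₁ C₂ : ℝ) (hC₁ : 0 < C₁) (hC₂ : 0 < C₂) :
    (∃ K : NNReal, LipschitzWith K (fun p : ℝ × ℝ × ℝ =>
        min p.1 (max (p.2.2 - p.2.1) (C₁ / (C₁ + C₂) * p.2.2)))) ∧
    ∀ d₁ d₂ s₃ : ℝ, d₁ ∈ Set.Icc 0 C₁ → d₂ ∈ Set.Icc 0 C₂ → 0 ≤ s₃ →
      0 ≤ min d₁ (max (s₃ - d₂) (C₁ / (C₁ + C₂) * s₃)) ∧
      min d₁ (max (s₃ - d₂) (C₁ / (C₁ + C₂) * s₃)) ≤ d₁ ∧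
      min d₁ (max (s₃ - d₂) (C₁ / (C₁ + C₂) * s₃)) +
        (min (d₁ + d₂) s₃ - min d₁ (max (s₃ - d₂) (C₁ / (C₁ + C₂) * s₃)))
        = min (d₁ + d₂) s₃ ∧
      0 ≤ min (d₁ + d₂) s₃ - min d₁ (max (s₃ - d₂) (C₁ / (C₁ + C₂) * s₃)) ∧
      min (d₁ + d₂) s₃ - min d₁ (max (s₃ - d₂) (C₁ / (C₁ + C₂) * s₃)) ≤ d₂ := by
  have hα₀ : 0 ≤ C₁ / (C₁ + C₂) := by positivity
  have hα₁ : C₁ / (C₁ + C₂) ≤ 1 := div_le_one_of_le₀ (by linarith) (by positivity)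
  refine ⟨⟨_, lipschitzWith_mergeOutflux _⟩, fun d₁ d₂ s₃ ⟨hd₁, _⟩ ⟨hd₂, _⟩ hs₃ ↦ ?_⟩
  exact ⟨mergeOutflux_nonneg hα₀ hd₁ hs₃, mergeOutflux_le_left, add_sub_cancel _ _,
    sub_nonneg.2 (mergeOutflux_le_min hα₁ hd₂ hs₃), min_sub_mergeOutflux_le⟩
end

section
/- Invariance of density bounds: suppose k : [0,T] → ℝ solves dk/dt = (1/L)(f(t) − g(t)) with L > 0, where 0 ≤ f(t) ≤ S(k(t)) and 0 ≤ g(t) ≤ D(k(t)) for continuous functions S, D : ℝ → ℝ satisfying D(k) = 0 for k ≤ 0 and S(k) = 0 for k ≥ k_j. If k(0) ∈ [0, k_j], then k(t) ∈ [0, k_j] for all t ∈ [0,T]. -/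
/-!
While `k < 0` the out-flux `g ≤ D(k) = 0` vanishes, so `k' = f / L ≥ 0`; while `k > k_j` the in-flux
`f ≤ S(k) = 0` vanishes, so `k' = -g / L ≤ 0`. A differentiable function whose derivative is
nonnegative wherever it lies below a level `c`, and which starts at or above `c`, cannot cross
below `c`: after the last time it was `≥ c` it would be nondecreasing.
-/

open Set

lemma forall_le_of_hasDerivAt_nonneg_below {k k' : ℝ → ℝ} {a b c : ℝ}
    (hderiv : ∀ t ∈ Icc a b, HasDerivAt k (k' t) t)
    (hsign : ∀ t ∈ Icc a b, k t < c → 0 ≤ k' t) (ha : c ≤ k a) :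
    ∀ t ∈ Icc a b, c ≤ k t := by
  intro t ht
  by_contra! hlt
  have hkc : ContinuousOn k (Icc a b) := fun x hx =>
    (hderiv x hx).continuousAt.continuousWithinAt
  set A := Icc a t ∩ k ⁻¹' Ici c
  have hA_closed : IsClosed A :=
    (hkc.mono (Icc_subset_Icc_right ht.2)).preimage_isClosed_of_isClosed isClosed_Icc isClosed_Ici
  have hA_bdd : BddAbove A := ⟨t, fun x hx => hx.1.2⟩
  obtain ⟨⟨has, hst⟩, hks⟩ : sSup A ∈ A := hA_closed.csSup_mem ⟨a, ⟨le_rfl, ht.1⟩, ha⟩ hA_bdd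
  set s := sSup A
  have hbelow : ∀ u ∈ Ioo s t, k u < c := fun u hu => not_le.1 fun h =>
    (le_csSup hA_bdd ⟨⟨has.trans hu.1.le, hu.2.le⟩, h⟩).not_gt hu.1
  have hsub : Icc s t ⊆ Icc a b := Icc_subset_Icc has ht.2
  have hmono : MonotoneOn k (Icc s t) := by
    refine monotoneOn_of_hasDerivWithinAt_nonneg (convex_Icc s t) (hkc.mono hsub)
      (fun x hx => (hderiv x (hsub (interior_subset hx))).hasDerivWithinAt) fun x hx => ?_
    rw [interior_Icc] at hx
    exact hsign x (hsub (Ioo_subset_Icc_self hx)) (hbelow x hx)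
  exact hlt.not_ge (hks.trans (hmono ⟨le_rfl, hst⟩ ⟨hst, le_rfl⟩ hst))

lemma forall_le_of_hasDerivAt_nonpos_above {k k' : ℝ → ℝ} {a b c : ℝ}
    (hderiv : ∀ t ∈ Icc a b, HasDerivAt k (k' t) t)
    (hsign : ∀ t ∈ Icc a b, c < k t → k' t ≤ 0) (ha : k a ≤ c) :
    ∀ t ∈ Icc a b, k t ≤ c := by
  have := forall_le_of_hasDerivAt_nonneg_below (k := -k) (k' := -k') (c := -c)
    (fun t ht => (hderiv t ht).neg)
    (fun t ht hlt => neg_nonneg.2 (hsign t ht (neg_lt_neg_iff.1 hlt))) (neg_le_neg ha)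
  exact fun t ht => neg_le_neg_iff.1 (this t ht)

theorem link_density_invariant_general (T L kj : ℝ) (hL : 0 < L)
    (k f g : ℝ → ℝ) (S D : ℝ → ℝ)
    (hderiv : ∀ t ∈ Set.Icc 0 T, HasDerivAt k ((1 / L) * (f t - g t)) t)
    (hf : ∀ t ∈ Set.Icc 0 T, 0 ≤ f t ∧ f t ≤ S (k t))
    (hg : ∀ t ∈ Set.Icc 0 T, 0 ≤ g t ∧ g t ≤ D (k t))
    (hD0 : ∀ x ≤ (0 : ℝ), D x = 0) (hSj : ∀ x, kj ≤ x → S x = 0)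
    (h0 : k 0 ∈ Set.Icc 0 kj) :
    ∀ t ∈ Set.Icc 0 T, k t ∈ Set.Icc 0 kj := by
  have hL' : 0 < 1 / L := one_div_pos.2 hL
  have hlower := forall_le_of_hasDerivAt_nonneg_below hderiv (fun t ht hneg => by
    have hg0 : g t = 0 := le_antisymm (hD0 (k t) hneg.le ▸ (hg t ht).2) (hg t ht).1
    rw [hg0, sub_zero]
    exact mul_nonneg hL'.le (hf t ht).1) h0.1
  have hupper := forall_le_of_hasDerivAt_nonpos_above hderiv (fun t ht hjam => by
    have hf0 : f t = 0 := le_antisymm (hSj (k t) hjam.le ▸ (hf t ht).2) (hf t ht).1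
    rw [hf0, zero_sub]
    exact mul_nonpos_of_nonneg_of_nonpos hL'.le (neg_nonpos.2 (hg t ht).1)) h0.2
  exact fun t ht => ⟨hlower t ht, hupper t ht⟩

/-- Invariance of density bounds for a single link: if dk/dt = (1/L)(f − g) with
0 ≤ f ≤ S(k) and 0 ≤ g ≤ D(k), where D vanishes for k ≤ 0 and S vanishes for k ≥ k_j,
then k(t) stays in [0, k_j]. -/
theorem link_density_invariant (T L kj : ℝ) (hT : 0 ≤ T) (hL : 0 < L) (hkj : 0 < kj)
    (k f g : ℝ → ℝ) (S D : ℝ → ℝ) (hScont : Continuous S) (hDcont : Continuous D)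
    (hfc : ContinuousOn f (Set.Icc 0 T)) (hgc : ContinuousOn g (Set.Icc 0 T))
    (hderiv : ∀ t ∈ Set.Icc 0 T, HasDerivAt k ((1 / L) * (f t - g t)) t)
    (hf : ∀ t ∈ Set.Icc 0 T, 0 ≤ f t ∧ f t ≤ S (k t))
    (hg : ∀ t ∈ Set.Icc 0 T, 0 ≤ g t ∧ g t ≤ D (k t))
    (hD0 : ∀ x ≤ (0 : ℝ), D x = 0) (hSj : ∀ x, kj ≤ x → S x = 0)
    (h0 : k 0 ∈ Set.Icc 0 kj) :
    ∀ t ∈ Set.Icc 0 T, k t ∈ Set.Icc 0 kj :=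
  link_density_invariant_general T L kj hL k f g S D hderiv hf hg hD0 hSj h0
end

section
/- In the discrete link queue update k^{i+1} = k^i + (Δt/L)(f^i − g^i), if 0 ≤ f^i ≤ S(k^i), 0 ≤ g^i ≤ D(k^i), D(k) ≤ V k, S(k) ≤ W(k_j − k), and Δt ≤ L / max{V, W}, then k^i ∈ [0, k_j] implies k^{i+1} ∈ [0, k_j]. -/
/-!
With `c = Δt / L`, the CFL condition says `c * V ≤ 1` and `c * W ≤ 1`. The outflow removes at most
`c * V * k ≤ k`, so the density stays nonnegative; the inflow adds at most
`c * W * (k_j - k) ≤ k_j - k`, so it stays below `k_j`. The second bound is the first one applied to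
the free space `k_j - k`, with the roles of inflow and outflow exchanged.
-/

theorem div_mul_le_one_of_le_div {L Δt a : ℝ} (hL : 0 < L) (hΔt : 0 < Δt) (hCFL : Δt ≤ L / a) :
    Δt / L * a ≤ 1 := by
  have ha : 0 < a := (div_pos_iff_of_pos_left hL).1 (hΔt.trans_le hCFL)
  rw [div_mul_eq_mul_div, div_le_one hL]
  exact (le_div_iff₀ ha).1 hCFL

theorem add_mul_sub_nonneg_of_le_mul {c V k f g : ℝ} (hc : 0 ≤ c) (hcV : c * V ≤ 1) (hk : 0 ≤ k)
    (hf : 0 ≤ f) (hg : g ≤ V * k) : 0 ≤ k + c * (f - g) :=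
  calc 0 ≤ (1 - c * V) * k := mul_nonneg (sub_nonneg.2 hcV) hk
    _ = k - c * (V * k) := by ring
    _ ≤ k - c * g := by gcongr
    _ ≤ k + c * (f - g) := by linarith [mul_nonneg hc hf]

theorem discrete_link_queue_invariant_general (L V W kj Δt : ℝ)
    (hL : 0 < L) (hΔt : 0 < Δt)
    (hCFL : Δt ≤ L / max V W)
    (D S : ℝ → ℝ)
    (hD : ∀ k ∈ Set.Icc 0 kj, 0 ≤ D k ∧ D k ≤ V * k)
    (hS : ∀ k ∈ Set.Icc 0 kj, 0 ≤ S k ∧ S k ≤ W * (kj - k))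
    (ki f g : ℝ) (hki : ki ∈ Set.Icc 0 kj)
    (hf : 0 ≤ f ∧ f ≤ S ki) (hg : 0 ≤ g ∧ g ≤ D ki) :
    ki + (Δt / L) * (f - g) ∈ Set.Icc 0 kj := by
  set c := Δt / L
  have hc : 0 ≤ c := by positivity
  have hcmax : c * max V W ≤ 1 := div_mul_le_one_of_le_div hL hΔt hCFL
  have hcV : c * V ≤ 1 := (mul_le_mul_of_nonneg_left (le_max_left V W) hc).trans hcmax
  have hcW : c * W ≤ 1 := (mul_le_mul_of_nonneg_left (le_max_right V W) hc).trans hcmax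
  constructor
  · exact add_mul_sub_nonneg_of_le_mul hc hcV hki.1 hf.1 (hg.2.trans (hD ki hki).2)
  · have hfree : 0 ≤ (kj - ki) + c * (g - f) :=
      add_mul_sub_nonneg_of_le_mul hc hcW (sub_nonneg.2 hki.2) hg.1 (hf.2.trans (hS ki hki).2)
    linarith

/-- Discrete link queue update under the CFL condition preserves the density bounds:
if k^{i+1} = k^i + (Δt/L)(f − g) with 0 ≤ f ≤ S(k^i), 0 ≤ g ≤ D(k^i), D(k) ≤ Vk,
S(k) ≤ W(k_j − k), and Δt ≤ L/max{V,W}, then k^i ∈ [0,k_j] implies k^{i+1} ∈ [0,k_j]. -/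
theorem discrete_link_queue_invariant (L V W kj Δt : ℝ)
    (hL : 0 < L) (hV : 0 < V) (hW : 0 < W) (hkj : 0 < kj) (hΔt : 0 < Δt)
    (hCFL : Δt ≤ L / max V W)
    (D S : ℝ → ℝ)
    (hD : ∀ k ∈ Set.Icc 0 kj, 0 ≤ D k ∧ D k ≤ V * k)
    (hS : ∀ k ∈ Set.Icc 0 kj, 0 ≤ S k ∧ S k ≤ W * (kj - k))
    (ki f g : ℝ) (hki : ki ∈ Set.Icc 0 kj)
    (hf : 0 ≤ f ∧ f ≤ S ki) (hg : 0 ≤ g ∧ g ≤ D ki) :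
    ki + (Δt / L) * (f - g) ∈ Set.Icc 0 kj :=
  discrete_link_queue_invariant_general L V W kj Δt hL hΔt hCFL D S hD hS ki f g hki hf hg
end
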